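/- Let 𝒟 be a probability distribution over pairs (x,y) ∈ ℝ^d × {0,1} with E[‖x‖] < ∞, let V ⊆ ℝ^d be a linear subspace, and let θ_p ∈ V minimize the expected BCE loss over V; write p(x) = σ(θ_pᵀx) and z_p(x) = θ_pᵀx. Then for any measurable function z_g : ℝ^d → ℝ (with g = σ∘z_g and all expectations below finite), L(p) ≤ L(g) + |E[(p(x) − y) z_g(x)]|, where L(h) = E[l(logit of h, y)] denotes expected BCE loss. -/

import Mathlib

open MeasureTheory ProbabilityTheory

/-- The sigmoid (logistic) function `σ(z) = 1 / (1 + e^{-z})`. -/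
noncomputable def sigmoid (z : ℝ) : ℝ := 1 / (1 + Real.exp (-z))

/-- The expected BCE loss `L(θ) = E[log(1+e^{θᵀx}) − y·θᵀx]` of a linear logit `θ`. -/
noncomputable def bceLoss {d : ℕ} (μ : Measure ((Fin d → ℝ) × ℝ)) (θ : Fin d → ℝ) : ℝ :=
  ∫ q, (Real.log (1 + Real.exp (∑ i, θ i * q.1 i)) - q.2 * (∑ i, θ i * q.1 i)) ∂μ

/-!
The pointwise loss is convex in the logit with derivative `σ z - y`, hence satisfies the
tangent inequality `l(w, y) ≥ l(z, y) + (σ z - y) (w - z)`. Since `V` contains every multiple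
`s θ_p`, minimality of `θ_p` along this ray forces the first-order condition
`E[(p(x) - y) z_p(x)] = 0`. Integrating the tangent inequality at `z_p` in the direction of `z_g`
then gives `L(g) ≥ L(p) + E[(p(x) - y) z_g(x)] ≥ L(p) - |E[(p(x) - y) z_g(x)]|`.
-/

open Set Filter Topology

noncomputable def bce (z y : ℝ) : ℝ := Real.log (1 + Real.exp z) - y * z

lemma sigmoid_eq_real_sigmoid : sigmoid = Real.sigmoid := by
  funext z
  rw [sigmoid, Real.sigmoid_def, one_div]

lemma sigmoid_mem_Icc (z : ℝ) : sigmoid z ∈ Icc 0 1 :=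
  sigmoid_eq_real_sigmoid ▸ ⟨Real.sigmoid_nonneg z, Real.sigmoid_le_one z⟩

lemma abs_sigmoid_sub_le_one (z : ℝ) {y : ℝ} (hy : y ∈ Icc 0 1) : |sigmoid z - y| ≤ 1 :=
  abs_sub_le_iff.2
    ⟨by linarith [(sigmoid_mem_Icc z).2, hy.1], by linarith [(sigmoid_mem_Icc z).1, hy.2]⟩

lemma abs_sigmoid_sub_mul_le (z w : ℝ) {y : ℝ} (hy : y ∈ Icc 0 1) :
    |(sigmoid z - y) * w| ≤ |w| := by
  rw [abs_mul]
  exact mul_le_of_le_one_left (abs_nonneg w) (abs_sigmoid_sub_le_one z hy)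

/- `(1 + e^w) / (1 + e^z)` is the convex combination `(1 - σ z) · e^0 + σ z · e^(w - z)`,
so convexity of `exp` bounds it below by `e^(σ z (w - z))`. -/
lemma log_one_add_exp_add_sigmoid_mul_sub_le (z w : ℝ) :
    Real.log (1 + Real.exp z) + sigmoid z * (w - z) ≤ Real.log (1 + Real.exp w) := by
  have hconv := convexOn_exp.2 (mem_univ 0) (mem_univ (w - z))
    (sub_nonneg.2 (sigmoid_mem_Icc z).2) (sigmoid_mem_Icc z).1 (by ring)
  have hcomb : (1 - sigmoid z) • Real.exp 0 + sigmoid z • Real.exp (w - z)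
      = (1 + Real.exp w) / (1 + Real.exp z) := by
    simp only [sigmoid, smul_eq_mul, Real.exp_zero, Real.exp_sub, Real.exp_neg]
    field_simp
    ring
  rw [hcomb, smul_eq_mul, smul_eq_mul, mul_zero, zero_add] at hconv
  have := Real.log_le_log (Real.exp_pos _) hconv
  rw [Real.log_exp, Real.log_div (by positivity) (by positivity)] at this
  linarith

lemma bce_add_sigmoid_sub_mul_sub_le (z w y : ℝ) :
    bce z y + (sigmoid z - y) * (w - z) ≤ bce w y := by
  have := log_one_add_exp_add_sigmoid_mul_sub_le z w
  simp only [bce]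
  linarith

lemma abs_bce_le (z : ℝ) {y : ℝ} (hy : y ∈ Icc 0 1) :
    |bce z y| ≤ Real.log 2 + 2 * |z| := by
  have hupper := log_one_add_exp_add_sigmoid_mul_sub_le z 0
  rw [Real.exp_zero, one_add_one_eq_two] at hupper
  have hnonneg : 0 ≤ Real.log (1 + Real.exp z) :=
    Real.log_nonneg (by linarith [Real.exp_pos z])
  have hsz : |sigmoid z * z| ≤ |z| := by
    rw [abs_mul, abs_of_nonneg (sigmoid_mem_Icc z).1]
    exact mul_le_of_le_one_left (abs_nonneg z) (sigmoid_mem_Icc z).2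
  have hyz : |y * z| ≤ |z| := by
    rw [abs_mul, abs_of_nonneg hy.1]
    exact mul_le_of_le_one_left (abs_nonneg z) hy.2
  rw [bce, abs_le]
  constructor <;> linarith [abs_le.1 hsz, abs_le.1 hyz]

lemma eq_zero_of_continuousAt_of_forall_sub_mul_nonneg {φ : ℝ → ℝ} {a : ℝ}
    (hφ : ContinuousAt φ a) (h : ∀ t, 0 ≤ (t - a) * φ t) : φ a = 0 := by
  apply le_antisymm
  · refine le_of_tendsto (hφ.mono_left nhdsWithin_le_nhds : Tendsto φ (𝓝[<] a) _) ?_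
    filter_upwards [self_mem_nhdsWithin] with t (ht : t < a)
    nlinarith [h t]
  · refine ge_of_tendsto (hφ.mono_left nhdsWithin_le_nhds : Tendsto φ (𝓝[>] a) _) ?_
    filter_upwards [self_mem_nhdsWithin] with t (ht : a < t)
    nlinarith [h t]

section

variable {Ω : Type*} [MeasurableSpace Ω] {μ : Measure Ω} {y z w : Ω → ℝ}

lemma integrable_bce [IsFiniteMeasure μ] (hz : Integrable z μ) (hym : AEStronglyMeasurable y μ)
    (hy : ∀ᵐ ω ∂μ, y ω ∈ Icc 0 1) : Integrable (fun ω => bce (z ω) (y ω)) μ := by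
  refine ((integrable_const (Real.log 2)).add (hz.abs.const_mul 2)).mono' ?_ ?_
  · have hbce : Continuous fun p : ℝ × ℝ => bce p.1 p.2 := by
      unfold bce
      fun_prop (disch := intro; positivity)
    exact hbce.comp_aestronglyMeasurable (hz.1.prodMk hym)
  · filter_upwards [hy] with ω hω using abs_bce_le (z ω) hω

lemma integrable_sigmoid_sub_mul (hz : AEStronglyMeasurable z μ) (hym : AEStronglyMeasurable y μ)
    (hy : ∀ᵐ ω ∂μ, y ω ∈ Icc 0 1) (hw : Integrable w μ) :
    Integrable (fun ω => (sigmoid (z ω) - y ω) * w ω) μ := by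
  refine hw.abs.mono' ?_ ?_
  · rw [sigmoid_eq_real_sigmoid]
    exact ((continuous_sigmoid.comp_aestronglyMeasurable hz).sub hym).mul hw.1
  · filter_upwards [hy] with ω hω using abs_sigmoid_sub_mul_le _ _ hω

lemma continuous_integral_sigmoid_mul_sub_mul (hz : Integrable z μ)
    (hym : AEStronglyMeasurable y μ) (hy : ∀ᵐ ω ∂μ, y ω ∈ Icc 0 1) :
    Continuous fun s : ℝ => ∫ ω, (sigmoid (s * z ω) - y ω) * z ω ∂μ := by
  refine continuous_of_dominated (bound := fun ω => |z ω|)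
    (fun s => (integrable_sigmoid_sub_mul (hz.1.const_mul s) hym hy hz).1) (fun s => ?_) hz.abs
    (Eventually.of_forall fun ω => ?_)
  · filter_upwards [hy] with ω hω using abs_sigmoid_sub_mul_le _ _ hω
  · rw [sigmoid_eq_real_sigmoid]
    fun_prop

lemma integral_bce_add_integral_sigmoid_sub_mul_sub_le
    (hz : Integrable (fun ω => bce (z ω) (y ω)) μ)
    (hres : Integrable (fun ω => (sigmoid (z ω) - y ω) * (w ω - z ω)) μ)
    (hw : Integrable (fun ω => bce (w ω) (y ω)) μ) :
    ∫ ω, bce (z ω) (y ω) ∂μ + ∫ ω, (sigmoid (z ω) - y ω) * (w ω - z ω) ∂μ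
      ≤ ∫ ω, bce (w ω) (y ω) ∂μ := by
  rw [← integral_add hz hres]
  exact integral_mono (hz.add hres) hw fun ω => bce_add_sigmoid_sub_mul_sub_le _ _ _

/- Optimality of `z` along the ray `s ↦ s z`: the tangent inequality at `s z` gives
`(s - 1) Φ s ≥ 0` for `Φ s = E[(σ(s z) - y) z]`, and `Φ` is continuous. -/
lemma integral_sigmoid_sub_mul_self_eq_zero [IsFiniteMeasure μ] (hz : Integrable z μ)
    (hym : AEStronglyMeasurable y μ) (hy : ∀ᵐ ω ∂μ, y ω ∈ Icc 0 1)
    (hmin : ∀ s : ℝ, ∫ ω, bce (z ω) (y ω) ∂μ ≤ ∫ ω, bce (s * z ω) (y ω) ∂μ) :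
    ∫ ω, (sigmoid (z ω) - y ω) * z ω ∂μ = 0 := by
  set Φ : ℝ → ℝ := fun s => ∫ ω, (sigmoid (s * z ω) - y ω) * z ω ∂μ with hΦ
  suffices Φ 1 = 0 by simpa only [hΦ, one_mul] using this
  refine eq_zero_of_continuousAt_of_forall_sub_mul_nonneg
    (continuous_integral_sigmoid_mul_sub_mul hz hym hy).continuousAt fun s => ?_
  have hfun : (fun ω => (sigmoid (s * z ω) - y ω) * (z ω - s * z ω))
      = fun ω => (1 - s) * ((sigmoid (s * z ω) - y ω) * z ω) := by
    funext ω
    ring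
  have htangent := integral_bce_add_integral_sigmoid_sub_mul_sub_le
    (integrable_bce (hz.const_mul s) hym hy)
    (hfun ▸ (integrable_sigmoid_sub_mul (hz.1.const_mul s) hym hy hz).const_mul (1 - s))
    (integrable_bce hz hym hy)
  rw [hfun, integral_const_mul] at htangent
  nlinarith [hmin s]

theorem integral_bce_le_add_abs_integral_sigmoid_sub_mul [IsFiniteMeasure μ]
    (hz : Integrable z μ) (hym : AEStronglyMeasurable y μ) (hy : ∀ᵐ ω ∂μ, y ω ∈ Icc 0 1)
    (hmin : ∀ s : ℝ, ∫ ω, bce (z ω) (y ω) ∂μ ≤ ∫ ω, bce (s * z ω) (y ω) ∂μ)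
    (hw : Integrable (fun ω => bce (w ω) (y ω)) μ)
    (hres : Integrable (fun ω => (sigmoid (z ω) - y ω) * w ω) μ) :
    ∫ ω, bce (z ω) (y ω) ∂μ
      ≤ ∫ ω, bce (w ω) (y ω) ∂μ + |∫ ω, (sigmoid (z ω) - y ω) * w ω ∂μ| := by
  have hres_self := integrable_sigmoid_sub_mul hz.1 hym hy hz
  have htangent := integral_bce_add_integral_sigmoid_sub_mul_sub_le (integrable_bce hz hym hy)
    (by simp_rw [mul_sub]; exact hres.sub hres_self) hw
  simp only [mul_sub] at htangent
  rw [integral_sub hres hres_self, integral_sigmoid_sub_mul_self_eq_zero hz hym hy hmin,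
    sub_zero] at htangent
  linarith [neg_abs_le (∫ ω, (sigmoid (z ω) - y ω) * w ω ∂μ)]

end

theorem bceLoss_le_of_subspace_min_general
    {d : ℕ} (μ : Measure ((Fin d → ℝ) × ℝ)) [IsProbabilityMeasure μ]
    (hy : ∀ᵐ q ∂μ, q.2 = 0 ∨ q.2 = 1)
    (hx : Integrable (fun q : (Fin d → ℝ) × ℝ => ‖q.1‖) μ)
    (V : Submodule ℝ (Fin d → ℝ))
    (θp : Fin d → ℝ) (hθpV : θp ∈ V)
    (hmin : ∀ θ ∈ V, bceLoss μ θp ≤ bceLoss μ θ)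
    (zg : (Fin d → ℝ) → ℝ)
    (hgInt : Integrable (fun q : (Fin d → ℝ) × ℝ =>
      Real.log (1 + Real.exp (zg q.1)) - q.2 * zg q.1) μ)
    (hresInt : Integrable (fun q : (Fin d → ℝ) × ℝ =>
      (sigmoid (∑ i, θp i * q.1 i) - q.2) * zg q.1) μ) :
    bceLoss μ θp
      ≤ (∫ q, (Real.log (1 + Real.exp (zg q.1)) - q.2 * zg q.1) ∂μ)
        + |∫ q, (sigmoid (∑ i, θp i * q.1 i) - q.2) * zg q.1 ∂μ| := by
  have hX : Integrable (fun q : (Fin d → ℝ) × ℝ => q.1) μ :=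
    (integrable_norm_iff measurable_fst.aestronglyMeasurable).1 hx
  have hzp : Integrable (fun q : (Fin d → ℝ) × ℝ => ∑ i, θp i * q.1 i) μ :=
    integrable_finsetSum _ fun i _ => (hX.eval i).const_mul (θp i)
  have hlabel : ∀ᵐ q ∂μ, q.2 ∈ Icc (0 : ℝ) 1 :=
    hy.mono fun q hq => by rcases hq with h | h <;> simp [h]
  have hscale (s : ℝ) : bceLoss μ θp ≤ ∫ q, bce (s * ∑ i, θp i * q.1 i) q.2 ∂μ := by
    simpa only [bceLoss, bce, Pi.smul_apply, smul_eq_mul, mul_assoc, ← Finset.mul_sum]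
      using hmin (s • θp) (V.smul_mem s hθpV)
  exact integral_bce_le_add_abs_integral_sigmoid_sub_mul hzp
    measurable_snd.aestronglyMeasurable hlabel hscale hgInt hresInt

/-- If `θ_p` minimizes expected BCE loss over a linear subspace `V` (with predictor
`p = σ∘z_p`, `z_p(x) = θ_pᵀx`), then for any measurable logit `z_g` (with the relevant
expectations finite), `L(p) ≤ L(g) + |E[(p(x) − y) z_g(x)]|`. -/
theorem bceLoss_le_of_subspace_min
    {d : ℕ} (μ : Measure ((Fin d → ℝ) × ℝ)) [IsProbabilityMeasure μ]
    (hy : ∀ᵐ q ∂μ, q.2 = 0 ∨ q.2 = 1)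
    (hx : Integrable (fun q : (Fin d → ℝ) × ℝ => ‖q.1‖) μ)
    (V : Submodule ℝ (Fin d → ℝ))
    (θp : Fin d → ℝ) (hθpV : θp ∈ V)
    (hmin : ∀ θ ∈ V, bceLoss μ θp ≤ bceLoss μ θ)
    (zg : (Fin d → ℝ) → ℝ) (hzg : Measurable zg)
    (hgInt : Integrable (fun q : (Fin d → ℝ) × ℝ =>
      Real.log (1 + Real.exp (zg q.1)) - q.2 * zg q.1) μ)
    (hresInt : Integrable (fun q : (Fin d → ℝ) × ℝ =>
      (sigmoid (∑ i, θp i * q.1 i) - q.2) * zg q.1) μ) :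
    bceLoss μ θp
      ≤ (∫ q, (Real.log (1 + Real.exp (zg q.1)) - q.2 * zg q.1) ∂μ)
        + |∫ q, (sigmoid (∑ i, θp i * q.1 i) - q.2) * zg q.1 ∂μ| :=
  bceLoss_le_of_subspace_min_general μ hy hx V θp hθpV hmin zg hgInt hresInt
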